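/- Let A ∈ R^{n×n} be symmetric positive definite and α ∈ (0,1). Then there exist an upper triangular matrix R ∈ R^{n×n} and a vector u ∈ R^n such that A = (1−α) R^T R + u u^T (namely u = √α · R^T e where e is the all-ones vector). -/

import Mathlib

/-!
Cholesky-factor both `A = Uᴴ U` and the Gram matrix `G_α = (1 - α) I + α e eᵀ = Vᴴ V` of `n`
equiangular unit vectors, which is positive definite for `0 ≤ α < 1`. Then `R = V⁻¹ U` is upper
triangular with `A = Rᵀ G_α R`, and expanding `G_α` gives
`A = (1 - α) Rᵀ R + (√α Rᵀ e) (√α Rᵀ e)ᵀ`.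
-/

open Matrix
open scoped ComplexOrder

lemma RCLike.exists_star_mul_self_eq_of_pos {𝕜 : Type*} [RCLike 𝕜] {z : 𝕜} (hz : 0 < z) :
    ∃ s : 𝕜, s ≠ 0 ∧ star s * s = z := by
  obtain ⟨x, hx, rfl⟩ := RCLike.pos_iff_exists_ofReal.1 hz
  refine ⟨(√x : ℝ), by exact_mod_cast (Real.sqrt_pos.2 hx).ne', ?_⟩
  rw [RCLike.star_def, RCLike.conj_ofReal, ← RCLike.ofReal_mul, Real.mul_self_sqrt hx.le]

namespace Matrix

section Cholesky

variable {𝕜 : Type*} [RCLike 𝕜] {n : Type*} [Fintype n] [LinearOrder n] [WellFoundedLT n]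
  [LocallyFiniteOrderBot n]

lemma PosDef.exists_upperTriangular_conjTranspose_mul_self_eq {S : Matrix n n 𝕜}
    (hS : S.PosDef) : ∃ U : Matrix n n 𝕜, U.BlockTriangular id ∧ IsUnit U ∧ Uᴴ * U = S := by
  have hD : ∀ i, 0 < LDL.diagEntries hS i := by
    rw [← posDef_diagonal_iff, ← LDL.diag, LDL.diag_eq_lowerInv_conj, ← star_eq_conjTranspose,
      (isUnit_of_invertible _).posDef_star_right_conjugate_iff]
    exact hS
  choose s hs0 hs using fun i => RCLike.exists_star_mul_self_eq_of_pos (hD i)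
  have hWt : (LDL.lowerInv hS)ᴴ.BlockTriangular id := fun i j hji => by
    simpa [conjTranspose_apply] using LDL.lowerInv_triangular hS hji
  refine ⟨diagonal s * (LDL.lower hS)ᴴ, ?_, ?_, ?_⟩
  · rw [LDL.lower, conjTranspose_nonsing_inv]
    exact (blockTriangular_diagonal s).mul (blockTriangular_inv_of_blockTriangular hWt)
  · rw [LDL.lower]
    exact (isUnit_diagonal.2 (Pi.isUnit_iff.2 fun i => (hs0 i).isUnit)).mul
      (isUnit_of_invertible _).star
  · calc (diagonal s * (LDL.lower hS)ᴴ)ᴴ * (diagonal s * (LDL.lower hS)ᴴ)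
        = LDL.lower hS * (diagonal (star s) * diagonal s) * (LDL.lower hS)ᴴ := by
          simp only [conjTranspose_mul, conjTranspose_conjTranspose, diagonal_conjTranspose,
            Matrix.mul_assoc]
      _ = S := by
        rw [diagonal_mul_diagonal, show (fun i => star s i * s i) = LDL.diagEntries hS from
          funext hs, ← LDL.diag, LDL.lower_conj_diag]

lemma PosDef.exists_upperTriangular_conjTranspose_mul_mul_eq {A G : Matrix n n 𝕜}
    (hA : A.PosDef) (hG : G.PosDef) :
    ∃ R : Matrix n n 𝕜, R.BlockTriangular id ∧ A = Rᴴ * G * R := by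
  obtain ⟨U, hU, -, rfl⟩ := hA.exists_upperTriangular_conjTranspose_mul_self_eq
  obtain ⟨V, hV, hVunit, rfl⟩ := hG.exists_upperTriangular_conjTranspose_mul_self_eq
  have := hVunit.invertible
  refine ⟨V⁻¹ * U, (blockTriangular_inv_of_blockTriangular hV).mul hU, ?_⟩
  simp only [conjTranspose_mul, conjTranspose_nonsing_inv, Matrix.mul_assoc,
    mul_inv_cancel_left_of_invertible, inv_mul_cancel_left_of_invertible]

end Cholesky

def equiangularGram (n : Type*) [DecidableEq n] (α : ℝ) : Matrix n n ℝ :=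
  (1 - α) • 1 + α • vecMulVec 1 1

section Equiangular

variable {n : Type*} [Fintype n] [DecidableEq n]

lemma posDef_equiangularGram {α : ℝ} (h0 : 0 ≤ α) (h1 : α < 1) :
    (equiangularGram n α).PosDef :=
  (PosDef.one.smul (sub_pos.2 h1)).add_posSemidef ((posSemidef_vecMulVec_self_star 1).smul h0)

lemma transpose_mul_equiangularGram_mul {m : Type*} [Fintype m] {α : ℝ} (h0 : 0 ≤ α)
    (R : Matrix n m ℝ) :
    Rᵀ * equiangularGram n α * R =
      (1 - α) • (Rᵀ * R) + vecMulVec (√α • (Rᵀ *ᵥ 1)) (√α • (Rᵀ *ᵥ 1)) := by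
  rw [equiangularGram, Matrix.mul_add, Matrix.add_mul, Matrix.mul_smul, Matrix.mul_one,
    Matrix.smul_mul, Matrix.mul_smul, Matrix.smul_mul, mul_vecMulVec, vecMulVec_mul,
    smul_vecMulVec, vecMulVec_smul, smul_smul, Real.mul_self_sqrt h0, ← vecMul_transpose,
    transpose_transpose]

end Equiangular

end Matrix

theorem cholesky_plus_rank_one (n : ℕ) (A : Matrix (Fin n) (Fin n) ℝ)
    (hA : A.PosDef) (α : ℝ) (hα0 : 0 < α) (hα1 : α < 1) :
    ∃ R : Matrix (Fin n) (Fin n) ℝ, R.BlockTriangular id ∧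
      A = (1 - α) • (Rᵀ * R) +
        Matrix.vecMulVec (Real.sqrt α • (Rᵀ *ᵥ (fun _ => 1)))
          (Real.sqrt α • (Rᵀ *ᵥ (fun _ => 1))) := by
  obtain ⟨R, hR, rfl⟩ :=
    hA.exists_upperTriangular_conjTranspose_mul_mul_eq (posDef_equiangularGram hα0.le hα1)
  refine ⟨R, hR, ?_⟩
  rw [conjTranspose_eq_transpose_of_trivial, transpose_mul_equiangularGram_mul hα0.le]
  rfl
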